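/- Every Jordan derivation on a 2-torsion-free prime ring is a derivation. -/

import Mathlib

/-!
Write `G(a, b) = δ(ab) - δ(a) b - a δ(b)`. Polarizing the Jordan identity and cancelling a
factor 2 gives `δ(aba)`, and polarizing that again yields
`G(a, b) x [a, b] + [a, b] x G(a, b) = 0` for all `x`. In a 2-torsion-free prime ring
`u x v + v x u ≡ 0` forces `u = 0` or `v = 0`, so for every pair either `G(a, b) = 0` or `a` and
`b` commute. As `G` is biadditive and no additive group is the union of two proper subgroups,
`G(a, b) ≠ 0` would make both `a` and `b` central, and then the polarized Jordan identity reads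
`2 G(a, b) = 0`.
-/

theorem AddMonoidHom.eq_zero_or_eq_zero_of_forall_or {M N P : Type*} [AddZeroClass M]
    [AddZeroClass N] [AddZeroClass P] (f : M →+ N) (g : M →+ P)
    (h : ∀ x, f x = 0 ∨ g x = 0) : f = 0 ∨ g = 0 := by
  by_contra! hfg
  obtain ⟨x, hx⟩ := DFunLike.ne_iff.mp hfg.1
  obtain ⟨y, hy⟩ := DFunLike.ne_iff.mp hfg.2
  have hgx : g x = 0 := (h x).resolve_left hx
  have hfy : f y = 0 := (h y).resolve_right hy
  rcases h (x + y) with hxy | hxy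
  · exact hx (by simpa [hfy] using hxy)
  · exact hy (by simpa [hgx] using hxy)

section PrimeRing

variable {R : Type*} [Ring R]

theorem eq_zero_or_eq_zero_of_forall_mul_mul_add_mul_mul_eq_zero
    (htf : ∀ a : R, 2 * a = 0 → a = 0)
    (hprime : ∀ a b : R, (∀ r : R, a * r * b = 0) → a = 0 ∨ b = 0)
    {u v : R} (h : ∀ x, u * x * v + v * x * u = 0) : u = 0 ∨ v = 0 := by
  refine hprime u v fun x => ?_
  by_cases hv : v = 0
  · simp [hv]
  -- `v z (v y u - u y v) = 0` is `h (z v y) - h z * y v`, so primeness makes `v y u = u y v`.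
  have hswap : ∀ y, v * y * u = u * y * v := fun y => by
    refine sub_eq_zero.mp <| (hprime v _ fun z => ?_).resolve_left hv
    have hzv := congrArg (· * (y * v)) (h z)
    simp only [add_mul, zero_mul] at hzv
    linear_combination (norm := noncomm_ring) h (z * v * y) - hzv
  exact htf _ (by linear_combination (norm := noncomm_ring) h x - hswap x)

end PrimeRing

section JordanDerivation

variable {R : Type*} [Ring R]

def IsJordanDerivation (δ : R →+ R) : Prop :=
  ∀ a : R, δ (a * a) = δ a * a + a * δ a

def derivationDefect (δ : R →+ R) : R →+ R →+ R :=
  AddMonoidHom.mul.compr₂ δ - AddMonoidHom.mul.comp δ - AddMonoidHom.mul.compl₂ δ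

@[simp]
theorem derivationDefect_apply (δ : R →+ R) (a b : R) :
    derivationDefect δ a b = δ (a * b) - δ a * b - a * δ b :=
  rfl

namespace IsJordanDerivation

variable {δ : R →+ R} (hδ : IsJordanDerivation δ)
include hδ

theorem map_mul_add_mul_swap (a b : R) :
    δ (a * b + b * a) = δ a * b + a * δ b + δ b * a + b * δ a := by
  have h := hδ (a + b)
  rw [show (a + b) * (a + b) = a * a + (a * b + b * a) + b * b by noncomm_ring,
    map_add, map_add, map_add δ a b, hδ a, hδ b] at h
  linear_combination (norm := noncomm_ring) h

theorem map_mul_mul_same (htf : ∀ a : R, 2 * a = 0 → a = 0) (a b : R) :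
    δ (a * b * a) = δ a * (b * a) + a * (δ b * a) + a * b * δ a := by
  have h := hδ.map_mul_add_mul_swap a (a * b + b * a)
  rw [show a * (a * b + b * a) + (a * b + b * a) * a =
      (a * a * b + b * (a * a)) + (a * b * a + a * b * a) by noncomm_ring,
    map_add, hδ.map_mul_add_mul_swap (a * a) b, map_add, hδ a, hδ.map_mul_add_mul_swap a b] at h
  refine sub_eq_zero.mp (htf _ ?_)
  linear_combination (norm := noncomm_ring) h

theorem map_mul_mul_add_mul_mul (htf : ∀ a : R, 2 * a = 0 → a = 0) (u x v : R) :
    δ (u * x * v + v * x * u) =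
      δ u * (x * v) + u * (δ x * v) + u * x * δ v +
        δ v * (x * u) + v * (δ x * u) + v * x * δ u := by
  have h := hδ.map_mul_mul_same htf (u + v) x
  rw [show (u + v) * x * (u + v) = u * x * u + (u * x * v + v * x * u) + v * x * v by
      noncomm_ring,
    map_add, map_add, map_add δ u v, hδ.map_mul_mul_same htf u x,
    hδ.map_mul_mul_same htf v x] at h
  linear_combination (norm := noncomm_ring) h

-- Expand `δ (ab x ba + ba x ab)` once directly and once as `δ (a (bxb) a + b (axa) b)`.
theorem derivationDefect_mul_mul_commutator_add (htf : ∀ a : R, 2 * a = 0 → a = 0)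
    (a b x : R) :
    derivationDefect δ a b * x * (a * b - b * a) +
      (a * b - b * a) * x * derivationDefect δ a b = 0 := by
  have hba : δ (b * a) = δ a * b + a * δ b + δ b * a + b * δ a - δ (a * b) :=
    eq_sub_of_add_eq' (by rw [← map_add]; exact hδ.map_mul_add_mul_swap a b)
  have hab := hδ.map_mul_mul_add_mul_mul htf (a * b) x (b * a)
  rw [show a * b * x * (b * a) + b * a * x * (a * b) = a * (b * x * b) * a + b * (a * x * a) * b
      by noncomm_ring, map_add, hδ.map_mul_mul_same htf, hδ.map_mul_mul_same htf,
    hδ.map_mul_mul_same htf, hδ.map_mul_mul_same htf, hba] at hab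
  simp only [derivationDefect_apply]
  linear_combination (norm := noncomm_ring) hab

theorem two_mul_derivationDefect_eq_zero {a b : R} (hab : Commute a b) (ha : Commute a (δ b))
    (hb : Commute (δ a) b) : 2 * derivationDefect δ a b = 0 := by
  have h := hδ.map_mul_add_mul_swap a b
  rw [← hab.eq, map_add] at h
  simp only [derivationDefect_apply]
  linear_combination (norm := noncomm_ring) h - ha.eq - hb.eq

variable (htf : ∀ a : R, 2 * a = 0 → a = 0)
  (hprime : ∀ a b : R, (∀ r : R, a * r * b = 0) → a = 0 ∨ b = 0)
include htf hprime

theorem derivationDefect_eq_zero_or_commute (a b : R) :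
    derivationDefect δ a b = 0 ∨ Commute a b :=
  (eq_zero_or_eq_zero_of_forall_mul_mul_add_mul_mul_eq_zero htf hprime
    (hδ.derivationDefect_mul_mul_commutator_add htf a b)).imp_right sub_eq_zero.mp

theorem derivationDefect_eq_zero_or_forall_commute_left (a : R) :
    derivationDefect δ a = 0 ∨ ∀ c, Commute a c := by
  refine (AddMonoidHom.eq_zero_or_eq_zero_of_forall_or _
    (AddMonoidHom.mulLeft a - AddMonoidHom.mulRight a) fun c => ?_).imp_right fun h c => ?_
  · simpa [sub_eq_zero, commute_iff_eq] using
      hδ.derivationDefect_eq_zero_or_commute htf hprime a c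
  · simpa [sub_eq_zero, commute_iff_eq] using DFunLike.congr_fun h c

theorem derivationDefect_eq_zero_or_forall_commute_right (b : R) :
    (derivationDefect δ).flip b = 0 ∨ ∀ c, Commute c b := by
  refine (AddMonoidHom.eq_zero_or_eq_zero_of_forall_or _
    (AddMonoidHom.mulRight b - AddMonoidHom.mulLeft b) fun c => ?_).imp_right fun h c => ?_
  · simpa [sub_eq_zero, commute_iff_eq] using
      hδ.derivationDefect_eq_zero_or_commute htf hprime c b
  · simpa [sub_eq_zero, commute_iff_eq] using DFunLike.congr_fun h c

end IsJordanDerivation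

end JordanDerivation

/-- Herstein's theorem: every Jordan derivation on a 2-torsion-free prime ring is a
derivation. -/
theorem jordan_derivation_of_prime_is_derivation
    {R : Type*} [Ring R]
    (htf : ∀ a : R, 2 * a = 0 → a = 0)
    (hprime : ∀ a b : R, (∀ r : R, a * r * b = 0) → a = 0 ∨ b = 0)
    (δ : R →+ R) (hδ : ∀ a : R, δ (a * a) = δ a * a + a * δ a) :
    ∀ a b : R, δ (a * b) = δ a * b + a * δ b := by
  have hJ : IsJordanDerivation δ := hδ
  intro a b
  suffices hG : derivationDefect δ a b = 0 by
    rwa [derivationDefect_apply, sub_sub, sub_eq_zero] at hG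
  by_contra hG
  have ha : ∀ c, Commute a c :=
    (hJ.derivationDefect_eq_zero_or_forall_commute_left htf hprime a).resolve_left
      fun h => hG (by rw [h, AddMonoidHom.zero_apply])
  have hb : ∀ c, Commute c b :=
    (hJ.derivationDefect_eq_zero_or_forall_commute_right htf hprime b).resolve_left
      fun h => hG (by rw [← AddMonoidHom.flip_apply, h, AddMonoidHom.zero_apply])
  exact hG (htf _ (hJ.two_mul_derivationDefect_eq_zero (ha b) (ha (δ b)) (hb (δ a))))
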